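/- arXiv:2605.28624 — 2 statements merged into one kernel-verified Lean document; each statement's English description precedes it below -/
import Mathlib

section
/- A finite-type scheme over an uncountable algebraically closed field k whose set of k-points is countable has only finitely many k-points. -/
/-!
A `k`-point of `X` lands in one of finitely many affine opens, so it suffices to treat `Spec A`
with `A` a finitely generated `k`-algebra, whose `k`-points are the `k`-algebra maps `A → k`.
If there are infinitely many, some generator `a` takes infinitely many values `φ a`, so `a` is
transcendental. Countably many values miss uncountably many `c : k`, and for each of them
`a - c` lies in no maximal ideal (all residue fields are `k` by the Nullstellensatz), so it is a
unit. The inverses `(a - c)⁻¹` are then linearly independent, which is impossible since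
`dim_k A ≤ ℵ₀`.
-/

open AlgebraicGeometry CategoryTheory Cardinal Polynomial

section Algebra

variable {R A : Type*} [CommRing R] [CommRing A] [Algebra R A]

theorem Algebra.FiniteType.exists_infinite_range_apply {B : Type*} [CommRing B] [Algebra R B]
    [Algebra.FiniteType R A] [Infinite (A →ₐ[R] B)] :
    ∃ a : A, (Set.range fun φ : A →ₐ[R] B ↦ φ a).Infinite := by
  obtain ⟨s, hs⟩ := Algebra.FiniteType.out (R := R) (A := A)
  by_contra! hfin
  refine (Set.Finite.pi fun a : s ↦ hfin a).not_infinite ?_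
  exact Set.infinite_of_injective_forall_mem (f := fun φ (a : s) ↦ φ a)
    (fun φ ψ h ↦ AlgHom.ext_of_adjoin_eq_top hs fun a ha ↦ congrFun h ⟨a, ha⟩)
    fun φ a _ ↦ ⟨φ, rfl⟩

theorem transcendental_of_infinite_range_apply [IsDomain R] {a : A}
    (h : (Set.range fun φ : A →ₐ[R] R ↦ φ a).Infinite) : Transcendental R a := by
  rintro ⟨P, hP, hPa⟩
  refine h ((finite_setOfPred_isRoot hP).subset ?_)
  rintro _ ⟨φ, rfl⟩
  simp [IsRoot, ← coe_aeval_eq_eval, aeval_algHom_apply, hPa]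

theorem Algebra.FiniteType.rank_le_aleph0 [Nontrivial R] [Algebra.FiniteType R A] :
    Module.rank R A ≤ ℵ₀ := by
  obtain ⟨n, f, hf⟩ := Algebra.FiniteType.iff_quotient_mvPolynomial''.mp ‹_›
  have hpoly : Module.rank R (MvPolynomial (Fin n) R) ≤ ℵ₀ := by
    rw [MvPolynomial.rank_eq_lift, lift_le_aleph0]
    exact mk_le_aleph0
  exact lift_le_aleph0.1 <|
    (f.toLinearMap.lift_rank_le_of_surjective hf).trans (lift_le_aleph0.2 hpoly)

theorem Transcendental.linearIndependent_sub_inverse {F : Type*} [Field F] [Algebra F A] {x : A}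
    (H : Transcendental F x) {S : Set F} (hS : ∀ c ∈ S, IsUnit (x - algebraMap F A c)) :
    LinearIndependent F fun c : S ↦ Ring.inverse (x - algebraMap F A c) := by
  classical
  refine linearIndependent_iff'.2 fun s g hg i hi ↦ ?_
  let P : F[X] := ∑ c ∈ s, C (g c) * ∏ j ∈ s.erase c, (X - C (j : F))
  have hPx : Polynomial.aeval x P = 0 := calc
    Polynomial.aeval x P = ∑ c ∈ s, g c • ∏ j ∈ s.erase c, (x - algebraMap F A j) := by
      simp [P, Algebra.smul_def]
    _ = (∏ j ∈ s, (x - algebraMap F A j)) * ∑ c ∈ s, g c • Ring.inverse (x - algebraMap F A c) := by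
      rw [Finset.mul_sum]
      refine Finset.sum_congr rfl fun c hc ↦ ?_
      rw [← Finset.prod_erase_mul _ _ hc, mul_smul_comm, mul_assoc,
        Ring.mul_inverse_cancel _ (hS c c.2), mul_one]
    _ = 0 := by rw [hg, mul_zero]
  have hPi : P.eval (i : F) = g i * ∏ j ∈ s.erase i, ((i : F) - j) := by
    simp only [P, eval_finsetSum, eval_mul, eval_C, eval_prod, eval_sub, eval_X]
    refine Finset.sum_eq_single i (fun c _ hci ↦ ?_) (absurd hi)
    rw [Finset.prod_eq_zero (Finset.mem_erase.2 ⟨Ne.symm hci, hi⟩) (sub_self _), mul_zero]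
  have hprod : ∏ j ∈ s.erase i, ((i : F) - j) ≠ 0 :=
    Finset.prod_ne_zero_iff.2 fun j hj ↦ sub_ne_zero.2 fun h ↦
      Finset.ne_of_mem_erase hj (Subtype.ext h).symm
  rw [transcendental_iff.1 H P hPx, eval_zero] at hPi
  exact (mul_eq_zero.1 hPi.symm).resolve_right hprod

end Algebra

section IsAlgClosed

variable {k A : Type*} [Field k] [IsAlgClosed k] [CommRing A] [Algebra k A]
  [Algebra.FiniteType k A]

theorem Ideal.IsMaximal.exists_algHom_ker_eq {m : Ideal A} (hm : m.IsMaximal) :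
    ∃ φ : A →ₐ[k] k, RingHom.ker φ = m := by
  let := Ideal.Quotient.field m
  have : Algebra.FiniteType k (A ⧸ m) := .of_surjective _ (Ideal.Quotient.mkₐ_surjective k m)
  have : Module.Finite k (A ⧸ m) := finite_of_finite_type_of_isJacobsonRing k (A ⧸ m)
  let e : k ≃ₐ[k] A ⧸ m :=
    AlgEquiv.ofBijective (Algebra.ofId k _) IsAlgClosed.algebraMap_bijective_of_isIntegral
  refine ⟨e.symm.toAlgHom.comp (Ideal.Quotient.mkₐ k m), ?_⟩
  ext a
  simp [Ideal.Quotient.eq_zero_iff_mem]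

theorem exists_algHom_apply_eq_of_not_isUnit {a : A} {c : k}
    (h : ¬IsUnit (a - algebraMap k A c)) : ∃ φ : A →ₐ[k] k, φ a = c := by
  obtain ⟨m, hm, ham⟩ := exists_max_ideal_of_mem_nonunits (mem_nonunits_iff.2 h)
  obtain ⟨φ, rfl⟩ := hm.exists_algHom_ker_eq (k := k)
  exact ⟨φ, by simpa [sub_eq_zero] using ham⟩

theorem finite_algHom_of_countable (hk : ¬Countable k) [Countable (A →ₐ[k] k)] :
    Finite (A →ₐ[k] k) := by
  by_contra hfin
  have := not_finite_iff_infinite.1 hfin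
  obtain ⟨a, ha⟩ := Algebra.FiniteType.exists_infinite_range_apply (R := k) (A := A) (B := k)
  set E := Set.range fun φ : A →ₐ[k] k ↦ φ a
  have hunit (c : k) (hc : c ∈ Eᶜ) : IsUnit (a - algebraMap k A c) :=
    not_not.1 fun h ↦ hc (exists_algHom_apply_eq_of_not_isUnit h)
  have hli := (transcendental_of_infinite_range_apply ha).linearIndependent_sub_inverse hunit
  have hcompl : (Eᶜ).Countable := mk_le_aleph0_iff.1 <| lift_le_aleph0.1 <|
    hli.cardinal_lift_le_rank.trans (lift_le_aleph0.2 Algebra.FiniteType.rank_le_aleph0)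
  have hE : E.Countable := Set.countable_range _
  exact hk (Set.countable_univ_iff.1 (by simpa [E] using hE.union hcompl))

end IsAlgClosed

namespace AlgebraicGeometry

universe u

abbrev Scheme.Hom.Sections {X S : Scheme.{u}} (p : X ⟶ S) : Type u :=
  {s : S ⟶ X // s ≫ p = 𝟙 S}

variable {X Y S : Scheme.{u}}

def Scheme.Hom.sectionsOfComp (f : Y ⟶ X) (p : X ⟶ S) : (f ≫ p).Sections → p.Sections :=
  fun t ↦ ⟨t.1 ≫ f, by rw [Category.assoc, t.2]⟩

lemma Scheme.Hom.sectionsOfComp_injective (f : Y ⟶ X) [Mono f] (p : X ⟶ S) :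
    Function.Injective (sectionsOfComp f p) :=
  fun _ _ h ↦ Subtype.ext ((cancel_mono f).1 congr($h.1))

def Scheme.Hom.sectionsEquivOfIso (e : Y ≅ X) {p : X ⟶ S} {q : Y ⟶ S} (h : e.hom ≫ p = q) :
    q.Sections ≃ p.Sections where
  toFun t := ⟨t.1 ≫ e.hom, by rw [Category.assoc, h, t.2]⟩
  invFun s := ⟨s.1 ≫ e.inv, by rw [Category.assoc, ← h, e.inv_hom_id_assoc, s.2]⟩
  left_inv t := by simp
  right_inv s := by simp

lemma Scheme.Hom.finite_sections_of_openCover [Unique S] (p : X ⟶ S) (𝒰 : X.OpenCover)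
    [Finite 𝒰.I₀] (h : ∀ i, Finite (𝒰.f i ≫ p).Sections) : Finite p.Sections := by
  refine Finite.of_surjective (fun t : Σ i, (𝒰.f i ≫ p).Sections ↦ sectionsOfComp _ p t.2) ?_
  rintro ⟨s, hs⟩
  let i := 𝒰.idx (s default)
  have hsub : Set.range s ⊆ Set.range (𝒰.f i) := by
    rintro _ ⟨y, rfl⟩
    rw [Subsingleton.elim y default]
    exact 𝒰.covers _
  exact ⟨⟨i, IsOpenImmersion.lift (𝒰.f i) s hsub, by simp [hs]⟩,
    Subtype.ext (IsOpenImmersion.lift_fac _ _ hsub)⟩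

noncomputable def Spec.sectionsEquivAlgHom (R A : Type u) [CommRing R] [CommRing A]
    [Algebra R A] : (Spec.map (CommRingCat.ofHom (algebraMap R A))).Sections ≃ (A →ₐ[R] R) where
  toFun t :=
    { toRingHom := (Spec.preimage t.1).hom
      commutes' r := by
        have : CommRingCat.ofHom (algebraMap R A) ≫ Spec.preimage t.1 = 𝟙 _ :=
          Spec.map_injective (by simp [t.2])
        exact congr($this r) }
  invFun φ := ⟨Spec.map (CommRingCat.ofHom φ.toRingHom), by
    have : φ.toRingHom.comp (algebraMap R A) = RingHom.id R := RingHom.ext φ.commutes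
    rw [← Spec.map_comp, ← CommRingCat.ofHom_comp, this, CommRingCat.ofHom_id, Spec.map_id]⟩
  left_inv t := Subtype.ext (Spec.map_preimage t.1)
  right_inv φ := by ext; simp

lemma Scheme.Hom.finite_sections_of_isAffine {k : Type u} [Field k] [IsAlgClosed k]
    (hk : ¬Countable k) [IsAffine Y] (q : Y ⟶ Spec (.of k)) [LocallyOfFiniteType q]
    [Countable q.Sections] : Finite q.Sections := by
  obtain ⟨g, hg⟩ := Spec.map_surjective (Y.isoSpec.inv ≫ q)
  let := g.hom.toAlgebra
  have : LocallyOfFiniteType (Spec.map g) := hg ▸ inferInstance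
  have : Algebra.FiniteType k Γ(Y, ⊤) :=
    (HasRingHomProperty.Spec_iff (P := @LocallyOfFiniteType)).1 this
  let e : (Γ(Y, ⊤) →ₐ[k] k) ≃ q.Sections :=
    (Spec.sectionsEquivAlgHom k Γ(Y, ⊤)).symm.trans (sectionsEquivOfIso Y.isoSpec.symm hg.symm)
  have : Countable (Γ(Y, ⊤) →ₐ[k] k) := e.countable_iff.2 ‹_›
  have := finite_algHom_of_countable hk (A := Γ(Y, ⊤))
  exact .of_equiv _ e

end AlgebraicGeometry

/-- A finite-type scheme over an uncountable algebraically closed field `k` whose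
set of `k`-points is countable has only finitely many `k`-points. -/
theorem stmt4 (k : Type) [Field k] [IsAlgClosed k] (hk : ¬ Countable k)
    (X : Scheme) (p : X ⟶ Spec (CommRingCat.of k))
    [LocallyOfFiniteType p] [QuasiCompact p]
    (hcount : Countable {s : Spec (CommRingCat.of k) ⟶ X // s ≫ p = 𝟙 _}) :
    Finite {s : Spec (CommRingCat.of k) ⟶ X // s ≫ p = 𝟙 _} := by
  have : CompactSpace X := QuasiCompact.compactSpace_of_compactSpace p
  let 𝒰 := X.affineCover.finiteSubcover
  refine p.finite_sections_of_openCover 𝒰 fun i ↦ ?_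
  have : Countable (𝒰.f i ≫ p).Sections :=
    (Scheme.Hom.sectionsOfComp_injective (𝒰.f i) p).countable
  exact Scheme.Hom.finite_sections_of_isAffine hk _
end

section
/- With the same cover of the cuspidal cubic, the Čech 1-cocycle dt ∈ Γ(U ∩ V, Ω¹) is not a coboundary: there do not exist Kähler differential forms ω₁ on Spec k[t⁻¹] and ω₂ on Spec k[t², t³] whose difference restricted to Spec k[t, t⁻¹] equals dt. -/
/-!
Compare coefficients of `t⁰`. Elements of `k[t⁻¹]` only have terms of degree `≤ 0` and elements
of `k[t², t³]` only terms of degree `≥ 0`, because the support of a product lies in the sum of the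
supports. Hence `-t⁻²·f`, `2t·g` and `3t²·h` have no constant term, whereas `dt` has coefficient `1`.
-/

open LaurentPolynomial

namespace AddMonoidAlgebra

variable {k G : Type*} [CommSemiring k] [AddMonoid G]

noncomputable def supportedSubalgebra (M : AddSubmonoid G) : Subalgebra k k[G] :=
  (supported k k (M : Set G)).toSubalgebra
    (fun g hg ↦ by
      rw [Finset.mem_zero.mp (support_coeff_one_subset hg)]
      exact M.zero_mem)
    fun x y hx hy ↦ by
      classical
      intro n hn
      obtain ⟨a, ha, b, hb, rfl⟩ := Finset.mem_add.mp (support_coeff_mul_subset x y hn)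
      exact M.add_mem (hx ha) (hy hb)

theorem mem_supportedSubalgebra {M : AddSubmonoid G} {x : k[G]} :
    x ∈ supportedSubalgebra M ↔ ∀ g ∉ M, x.coeff g = 0 :=
  mem_supported' (R := k)

theorem coeff_eq_zero_of_mem_adjoin {M : AddSubmonoid G} {s : Set k[G]}
    (hs : ∀ x ∈ s, ∀ g ∉ M, x.coeff g = 0) {x : k[G]} (hx : x ∈ Algebra.adjoin k s) {g : G}
    (hg : g ∉ M) : x.coeff g = 0 := by
  have hle : Algebra.adjoin k s ≤ supportedSubalgebra M :=
    Algebra.adjoin_le fun y hy ↦ mem_supportedSubalgebra.mpr (hs y hy)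
  exact mem_supportedSubalgebra.mp (hle hx) g hg

end AddMonoidAlgebra

namespace LaurentPolynomial

variable {R : Type*}

lemma coeff_mul_T [Semiring R] (f : R[T;T⁻¹]) (m n : ℤ) : (f * T m).coeff n = f.coeff (n - m) := by
  rw [T, AddMonoidAlgebra.coeff_mul_single_apply, mul_one, sub_eq_add_neg]

variable [CommSemiring R] {S : Set ℤ} {f : R[T;T⁻¹]} {n : ℤ}

lemma coeff_eq_zero_of_mem_adjoin_T {M : AddSubmonoid ℤ} (hS : S ⊆ M)
    (hf : f ∈ Algebra.adjoin R (T '' S)) (hn : n ∉ M) : f.coeff n = 0 := by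
  refine AddMonoidAlgebra.coeff_eq_zero_of_mem_adjoin ?_ hf hn
  rintro _ ⟨m, hm, rfl⟩ n hn
  rw [T_apply, if_neg]
  rintro rfl
  exact hn (hS hm)

lemma coeff_eq_zero_of_mem_adjoin_T_of_nonneg (hS : ∀ m ∈ S, 0 ≤ m)
    (hf : f ∈ Algebra.adjoin R (T '' S)) (hn : n < 0) : f.coeff n = 0 :=
  coeff_eq_zero_of_mem_adjoin_T (M := .nonneg ℤ) hS hf hn.not_ge

lemma coeff_eq_zero_of_mem_adjoin_T_of_nonpos (hS : ∀ m ∈ S, m ≤ 0)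
    (hf : f ∈ Algebra.adjoin R (T '' S)) (hn : 0 < n) : f.coeff n = 0 :=
  coeff_eq_zero_of_mem_adjoin_T (M := (AddSubmonoid.nonneg ℤ).comap negAddMonoidHom)
    (fun m hm ↦ neg_nonneg.mpr (hS m hm)) hf (by simpa using hn)

end LaurentPolynomial

theorem stmt7_general (k : Type*) [Field k] :
    ¬ ∃ f ∈ Algebra.adjoin k {(T (-1) : LaurentPolynomial k)},
        ∃ g ∈ Algebra.adjoin k {(T 2 : LaurentPolynomial k), T 3},
          ∃ h ∈ Algebra.adjoin k {(T 2 : LaurentPolynomial k), T 3},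
            (1 : LaurentPolynomial k) =
              (-(T (-2)) * f) - (2 * T 1 * g + 3 * T 2 * h) := by
  rintro ⟨f, hf, g, hg, h, hh, hdt⟩
  rw [← Set.image_singleton] at hf
  rw [← Set.image_pair] at hg hh
  have hf₂ : f.coeff 2 = 0 := coeff_eq_zero_of_mem_adjoin_T_of_nonpos (by simp) hf two_pos
  have hg₁ : g.coeff (-1) = 0 := coeff_eq_zero_of_mem_adjoin_T_of_nonneg (by simp) hg (by norm_num)
  have hh₂ : h.coeff (-2) = 0 := coeff_eq_zero_of_mem_adjoin_T_of_nonneg (by simp) hh (by norm_num)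
  have hdt₀ := congrArg (·.coeff 0) hdt
  simp [coeff_mul_T, ← map_ofNat C, ← smul_eq_C_mul, hf₂, hg₁, hh₂] at hdt₀

/-- The Čech 1-cocycle `dt` on the standard cover of the cuspidal cubic is not a
coboundary.  In coordinates in `Ω¹_{k[t,t⁻¹]/k} = k[t,t⁻¹]·dt`: differentials on `k[t⁻¹]` are
`f · d(t⁻¹) = -f·t⁻² dt` with `f ∈ k[t⁻¹]`, and differentials on `k[t²,t³]` map to
`g·d(t²) + h·d(t³) = (2t·g + 3t²·h) dt` with `g, h ∈ k[t²,t³]`; the claim is that `dt`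
(coefficient `1`) is not a difference `ω₁ - ω₂` of such forms. -/
theorem stmt7 (k : Type*) [Field k] [CharZero k] :
    ¬ ∃ f ∈ Algebra.adjoin k {(T (-1) : LaurentPolynomial k)},
        ∃ g ∈ Algebra.adjoin k {(T 2 : LaurentPolynomial k), T 3},
          ∃ h ∈ Algebra.adjoin k {(T 2 : LaurentPolynomial k), T 3},
            (1 : LaurentPolynomial k) =
              (-(T (-2)) * f) - (2 * T 1 * g + 3 * T 2 * h) :=
  stmt7_general k
end
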